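/- arXiv:1406.0018 — 2 statements merged into one kernel-verified Lean document; each statement's English description precedes it below -/
import Mathlib

section
/- Let g : ℝ³ → Matrix (Fin 3) (Fin 3) ℝ be a smooth map taking values in invertible symmetric 3×3 matrices, with inverse entries denoted g^{js}, and let φ : ℝ³ → ℝ be smooth and everywhere positive. Define the covector field ω(g) with components ω(g)_k = 2 ∑_j g_{kj} ∑_s ∂_{x^s}(g^{js}) + ∂_{x^k}(ln |det g|), where (x¹,x²,x³) are the standard coordinates on ℝ³. Then the covector associated to the conformally rescaled matrix field φ²g satisfies ω(φ²g)_k = ω(g)_k + 2 ∂_{x^k}(ln φ) for all k and at every point of ℝ³. -/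
/-!
Since `(φ²g)⁻¹ = φ⁻² g⁻¹`, the product rule and `g_{kj} g^{js} = δ_k^s` show that the first term
of `ω` changes by `2 φ² ∂_k(φ⁻²) = -4 ∂_k ln φ`, while `det(φ²g) = φ⁶ det g` shifts the
log-determinant term by `6 ∂_k ln φ`. For `n × n` matrices the two shifts are `-4` and `2n`, so
the net shift `2 ∂_k ln φ` is special to dimension three.
-/

noncomputable section

/-- Partial derivative of `f` along the `i`-th coordinate direction on `ℝⁿ`. -/
def pd {n : ℕ} (i : Fin n) (f : (Fin n → ℝ) → ℝ) : (Fin n → ℝ) → ℝ :=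
  fun x => fderiv ℝ f x (Pi.single i 1)

/-- Formula (omega) of the paper:
`ω(g)_k = 2 ∑_j g_{kj} ∑_s ∂_{x^s}(g^{js}) + ∂_{x^k}(ln |det g|)`,
where `g^{js}` are the entries of the pointwise inverse matrix. -/
def omegaEW (g : (Fin 3 → ℝ) → Matrix (Fin 3) (Fin 3) ℝ) (k : Fin 3) :
    (Fin 3 → ℝ) → ℝ :=
  fun x =>
    2 * ∑ j : Fin 3, g x k j * (∑ s : Fin 3, pd s (fun y => (g y)⁻¹ j s) x)
      + pd k (fun y => Real.log |(g y).det|) x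

section MatrixCalculus

variable {𝕜 E ι : Type*} [NontriviallyNormedField 𝕜] [NormedAddCommGroup E] [NormedSpace 𝕜 E]
  [Fintype ι] [DecidableEq ι] {A : E → Matrix ι ι 𝕜} {x : E}

theorem DifferentiableAt.matrix_det (hA : ∀ i j, DifferentiableAt 𝕜 (fun y => A y i j) x) :
    DifferentiableAt 𝕜 (fun y => (A y).det) x := by
  simp_rw [Matrix.det_apply]
  exact .fun_sum fun σ _ =>
    (HasFDerivAt.finsetProd fun i _ => (hA _ _).hasFDerivAt).differentiableAt.const_smul _

theorem DifferentiableAt.matrix_inv_apply (hA : ∀ i j, DifferentiableAt 𝕜 (fun y => A y i j) x)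
    (hdet : (A x).det ≠ 0) (i j : ι) : DifferentiableAt 𝕜 (fun y => (A y)⁻¹ i j) x := by
  simp_rw [Matrix.inv_def, Ring.inverse_eq_inv, Matrix.smul_apply, smul_eq_mul,
    Matrix.adjugate_apply]
  refine ((DifferentiableAt.matrix_det hA).inv hdet).mul (.matrix_det fun a b => ?_)
  simp only [Matrix.updateRow_apply]
  split_ifs
  · exact differentiableAt_const _
  · exact hA a b

end MatrixCalculus

theorem Matrix.sum_mul_sum_mul_inv_apply {K ι : Type*} [Field K] [Fintype ι] [DecidableEq ι]
    (A : Matrix ι ι K) (hA : A.det ≠ 0) (c : ι → K) (k : ι) :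
    ∑ j, A k j * ∑ s, c s * A⁻¹ j s = c k := by
  have h : A.mulVec (A⁻¹.mulVec c) = c := by
    rw [Matrix.mulVec_mulVec, Matrix.mul_nonsing_inv _ hA.isUnit, Matrix.one_mulVec]
  simpa [Matrix.mulVec, dotProduct, mul_comm] using congrFun h k

theorem Real.log_abs_det_smul {ι : Type*} [Fintype ι] [DecidableEq ι] (A : Matrix ι ι ℝ)
    {c : ℝ} (hc : c ≠ 0) (hA : A.det ≠ 0) :
    Real.log |(c • A).det| = Fintype.card ι * Real.log |c| + Real.log |A.det| := by
  rw [Matrix.det_smul, abs_mul, abs_pow, Real.log_mul (by positivity) (by positivity),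
    Real.log_pow]

section PartialDerivative

variable {n : ℕ} {f h : (Fin n → ℝ) → ℝ} {x : Fin n → ℝ}

theorem pd_add (hf : DifferentiableAt ℝ f x) (hh : DifferentiableAt ℝ h x) (i : Fin n) :
    pd i (fun y => f y + h y) x = pd i f x + pd i h x := by
  simp [pd, fderiv_fun_add hf hh]

theorem pd_mul (hf : DifferentiableAt ℝ f x) (hh : DifferentiableAt ℝ h x) (i : Fin n) :
    pd i (fun y => f y * h y) x = pd i f x * h x + f x * pd i h x := by
  simp [pd, fderiv_fun_mul hf hh]
  ring

theorem pd_const_mul (hf : DifferentiableAt ℝ f x) (c : ℝ) (i : Fin n) :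
    pd i (fun y => c * f y) x = c * pd i f x := by
  simp [pd, fderiv_const_mul hf c]

theorem pd_inv (hf : DifferentiableAt ℝ f x) (hx : f x ≠ 0) (i : Fin n) :
    pd i (fun y => (f y)⁻¹) x = -(f x ^ 2)⁻¹ * pd i f x := by
  have hd := ((hasFDerivAt_inv hx).comp x hf.hasFDerivAt).fderiv
  simp only [Function.comp_def] at hd
  simp [pd, hd, mul_comm]

theorem pd_log (hf : DifferentiableAt ℝ f x) (hx : f x ≠ 0) (i : Fin n) :
    pd i (fun y => Real.log (f y)) x = (f x)⁻¹ * pd i f x := by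
  simp [pd, (hf.hasFDerivAt.log hx).fderiv]

end PartialDerivative

section ConformalRescaling

variable {n : ℕ} {g : (Fin n → ℝ) → Matrix (Fin n) (Fin n) ℝ} {u : (Fin n → ℝ) → ℝ}
  {x : Fin n → ℝ}

theorem sum_mul_sum_pd_inv_smul (hu : ∀ y, u y ≠ 0) (hdet : ∀ y, (g y).det ≠ 0)
    (hux : DifferentiableAt ℝ u x) (hgx : ∀ i j, DifferentiableAt ℝ (fun y => g y i j) x)
    (k : Fin n) :
    ∑ j, (u x • g x) k j * ∑ s, pd s (fun y => (u y • g y)⁻¹ j s) x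
      = ∑ j, g x k j * ∑ s, pd s (fun y => (g y)⁻¹ j s) x - pd k (fun y => Real.log (u y)) x := by
  set c : Fin n → ℝ := fun s => pd s (fun y => (u y)⁻¹) x
  have hinv (j s : Fin n) :
      (fun y => (u y • g y)⁻¹ j s) = fun y => (u y)⁻¹ * (g y)⁻¹ j s := by
    funext y
    simpa [Units.smul_def] using
      congrFun₂ (Matrix.inv_smul' (g y) (Units.mk0 (u y) (hu y)) (hdet y).isUnit) j s
  have hdiv (j : Fin n) : ∑ s, pd s (fun y => (u y • g y)⁻¹ j s) x
      = ∑ s, c s * (g x)⁻¹ j s + (u x)⁻¹ * ∑ s, pd s (fun y => (g y)⁻¹ j s) x := by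
    rw [Finset.mul_sum, ← Finset.sum_add_distrib]
    refine Finset.sum_congr rfl fun s _ => ?_
    rw [hinv, pd_mul (hux.fun_inv (hu x)) (DifferentiableAt.matrix_inv_apply hgx (hdet x) _ _)]
  calc ∑ j, (u x • g x) k j * ∑ s, pd s (fun y => (u y • g y)⁻¹ j s) x
      = u x * ∑ j, g x k j * ∑ s, c s * (g x)⁻¹ j s
          + ∑ j, g x k j * ∑ s, pd s (fun y => (g y)⁻¹ j s) x := by
        simp only [hdiv, Matrix.smul_apply, smul_eq_mul, Finset.mul_sum, ← Finset.sum_add_distrib]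
        refine Finset.sum_congr rfl fun j _ => ?_
        field_simp [hu x]
    _ = u x * c k + ∑ j, g x k j * ∑ s, pd s (fun y => (g y)⁻¹ j s) x := by
        rw [Matrix.sum_mul_sum_mul_inv_apply _ (hdet x)]
    _ = _ := by
        simp only [c, pd_inv hux (hu x), pd_log hux (hu x)]
        field_simp [hu x]
        ring

theorem pd_log_abs_det_smul (hu : ∀ y, u y ≠ 0) (hdet : ∀ y, (g y).det ≠ 0)
    (hux : DifferentiableAt ℝ u x) (hgx : ∀ i j, DifferentiableAt ℝ (fun y => g y i j) x)
    (k : Fin n) :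
    pd k (fun y => Real.log |(u y • g y).det|) x
      = n * pd k (fun y => Real.log (u y)) x + pd k (fun y => Real.log |(g y).det|) x := by
  have hlog : (fun y => Real.log |(u y • g y).det|)
      = fun y => n * Real.log (u y) + Real.log ((g y).det) := by
    funext y
    rw [Real.log_abs_det_smul _ (hu y) (hdet y), Fintype.card_fin, Real.log_abs, Real.log_abs]
  have hlogu := hux.log (hu x)
  rw [hlog]
  simp only [Real.log_abs]
  rw [pd_add (hlogu.const_mul _) ((DifferentiableAt.matrix_det hgx).log (hdet x)),
    pd_const_mul hlogu]

end ConformalRescaling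

theorem omegaEW_smul {g : (Fin 3 → ℝ) → Matrix (Fin 3) (Fin 3) ℝ} {u : (Fin 3 → ℝ) → ℝ}
    {x : Fin 3 → ℝ} (hu : ∀ y, u y ≠ 0) (hdet : ∀ y, (g y).det ≠ 0)
    (hux : DifferentiableAt ℝ u x) (hgx : ∀ i j, DifferentiableAt ℝ (fun y => g y i j) x)
    (k : Fin 3) :
    omegaEW (fun y => u y • g y) k x = omegaEW g k x + pd k (fun y => Real.log (u y)) x := by
  simp only [omegaEW, sum_mul_sum_pd_inv_smul hu hdet hux hgx,
    pd_log_abs_det_smul hu hdet hux hgx]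
  push_cast
  ring

theorem omega_conformal_gauge_general
    (g : (Fin 3 → ℝ) → Matrix (Fin 3) (Fin 3) ℝ)
    (φ : (Fin 3 → ℝ) → ℝ)
    (hg : ∀ i j : Fin 3, ContDiff ℝ (⊤ : ℕ∞) fun x => g x i j)
    (hdet : ∀ x, (g x).det ≠ 0)
    (hφ : ContDiff ℝ (⊤ : ℕ∞) φ)
    (hφpos : ∀ x, 0 < φ x) :
    ∀ (k : Fin 3) (x : Fin 3 → ℝ),
      omegaEW (fun y => (φ y) ^ 2 • g y) k x
        = omegaEW g k x + 2 * pd k (fun y => Real.log (φ y)) x := by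
  intro k x
  have hφx : DifferentiableAt ℝ φ x := hφ.differentiable (by simp) x
  have hgx (i j : Fin 3) : DifferentiableAt ℝ (fun y => g y i j) x :=
    (hg i j).differentiable (by simp) x
  have hlog_sq : (fun y => Real.log (φ y ^ 2)) = fun y => 2 * Real.log (φ y) := by
    funext y
    rw [Real.log_pow, Nat.cast_ofNat]
  rw [omegaEW_smul (fun y => pow_ne_zero 2 (hφpos y).ne') hdet (hφx.pow 2) hgx, hlog_sq,
    pd_const_mul (hφx.log (hφpos x).ne')]

/-- Gauge covariance of the covector `ω` under conformal rescaling `g → φ²g`: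
`ω(φ²g)_k = ω(g)_k + 2 ∂_{x^k}(ln φ)`. -/
theorem omega_conformal_gauge
    (g : (Fin 3 → ℝ) → Matrix (Fin 3) (Fin 3) ℝ)
    (φ : (Fin 3 → ℝ) → ℝ)
    (hg : ∀ i j : Fin 3, ContDiff ℝ (⊤ : ℕ∞) fun x => g x i j)
    (hsymm : ∀ x, (g x).IsSymm)
    (hdet : ∀ x, (g x).det ≠ 0)
    (hφ : ContDiff ℝ (⊤ : ℕ∞) φ)
    (hφpos : ∀ x, 0 < φ x) :
    ∀ (k : Fin 3) (x : Fin 3 → ℝ),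
      omegaEW (fun y => (φ y) ^ 2 • g y) k x
        = omegaEW g k x + 2 * pd k (fun y => Real.log (φ y)) x :=
  omega_conformal_gauge_general g φ hg hdet hφ hφpos
end
end

section
/- Let p, q, r : ℝ⁴ → ℝ be smooth functions of (w, z, x, y) satisfying p_{xx} + 2q_{xy} + r_{yy} = 0 at every point. Then there exist smooth functions F, G : ℝ⁴ → ℝ such that p = F_y, q = −(F_x + G_y)/2, and r = G_x everywhere. -/
/-!
Write `P i f v = ∫ t in 0..v i, f (update v i t)` for the primitive of `f` in the `i`-th
coordinate. Differentiating under the integral sign gives `∂ᵢ (P i f) = f` and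
`∂ⱼ (P i f) = P i (∂ⱼ f)` for `j ≠ i`, and `P i f` is as smooth as `f`.

The naive potentials `F₀ = P_y p`, `G₀ = P_x r` already satisfy `∂_y F₀ = p` and `∂_x G₀ = r`.
Their defect `ψ = -2q - ∂_x F₀ - ∂_y G₀ = -2q - P_y (∂_x p) - P_x (∂_y r)` satisfies
`∂_x ∂_y ψ = -(p_xx + 2 q_xy + r_yy) = 0`, so `∂_y ψ` does not depend on `x` and
`ψ = α + β` with `β v = ψ (v with x = 0)`, `∂_x β = 0` and `∂_y α = 0`.
Then `F = F₀ + P_x α` and `G = G₀ + P_y β` are the required potentials.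
-/

noncomputable section

open Function MeasureTheory Set Filter Topology ContinuousLinearMap
open scoped ContDiff

section ParametricPrimitive

variable {H E : Type*} [NormedAddCommGroup H] [NormedSpace ℝ H]
  [NormedAddCommGroup E] [NormedSpace ℝ E]
  {G : H → ℝ → E} {G' : H → ℝ → H →L[ℝ] E}

theorem hasFDerivAt_intervalIntegral_of_continuous (hG : Continuous ↿G) (hG' : Continuous ↿G')
    (hGG' : ∀ x t, HasFDerivAt (G · t) (G' x t) x) (a b : ℝ) (x₀ : H) :
    HasFDerivAt (fun x => ∫ t in a..b, G x t) (∫ t in a..b, G' x₀ t) x₀ := by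
  obtain ⟨M, hM⟩ := (isCompact_uIcc (a := a) (b := b)).exists_bound_of_continuousOn
    (hG'.comp (Continuous.prodMk_right x₀)).continuousOn
  obtain ⟨s, hs, hsM⟩ : ∃ s ∈ 𝓝 x₀, ∀ x ∈ s, ∀ t ∈ uIcc a b, ‖G' x t‖ < M + 1 :=
    (isCompact_uIcc.eventually_forall_of_forall_eventually fun t ht =>
      (hG'.norm.continuousAt (x := (x₀, t))).eventually_lt continuousAt_const
        (by simpa using (hM t ht).trans_lt (lt_add_one M))).exists_mem
  refine intervalIntegral.hasFDerivAt_integral_of_dominated_of_fderiv_le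
    (bound := fun _ => M + 1) hs
    (Eventually.of_forall fun x => (hG.comp (Continuous.prodMk_right x)).aestronglyMeasurable)
    ((hG.comp (Continuous.prodMk_right x₀)).intervalIntegrable a b)
    (hG'.comp (Continuous.prodMk_right x₀)).aestronglyMeasurable
    (Eventually.of_forall fun t ht x hx => (hsM x hx t (uIoc_subset_uIcc ht)).le)
    intervalIntegrable_const (Eventually.of_forall fun t _ x _ => hGG' x t)

variable [CompleteSpace E]

theorem hasStrictFDerivAt_parametricPrimitive (hG : Continuous ↿G) (hG' : Continuous ↿G')
    (hGG' : ∀ x t, HasFDerivAt (G · t) (G' x t) x) (a : ℝ) (z : H × ℝ) :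
    HasStrictFDerivAt ↿(fun x b => ∫ t in a..b, G x t)
      ((∫ t in a..z.2, G' z.1 t).coprod (toSpanSingleton ℝ (G z.1 z.2))) z :=
  hasStrictFDerivAt_uncurry_coprod
    (f₁ := fun x b => ∫ t in a..b, G' x t) (f₂ := fun x b => toSpanSingleton ℝ (G x b))
    (Eventually.of_forall fun w =>
      hasFDerivAt_intervalIntegral_of_continuous hG hG' hGG' a w.2 w.1)
    (Eventually.of_forall fun w => (intervalIntegral.integral_hasDerivAt_right
      ((hG.comp (Continuous.prodMk_right w.1)).intervalIntegrable a w.2)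
      ((hG.comp (Continuous.prodMk_right w.1)).stronglyMeasurableAtFilter _ _)
      (hG.comp (Continuous.prodMk_right w.1)).continuousAt).hasFDerivAt)
    (intervalIntegral.continuous_parametric_primitive_of_continuous hG').continuousAt
    ((toSpanSingletonCLE (𝕜 := ℝ)).continuous.comp hG).continuousAt

end ParametricPrimitive

universe u

-- `H` and `E` share a universe so that the induction can pass to `H →L[ℝ] E`-valued integrands.
theorem contDiff_parametricPrimitive {H E : Type u} [NormedAddCommGroup H] [NormedSpace ℝ H]
    [NormedAddCommGroup E] [NormedSpace ℝ E] [CompleteSpace E] {G : H → ℝ → E} {k : ℕ∞}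
    (hG : ContDiff ℝ k ↿G) (a : ℝ) :
    ContDiff ℝ k ↿(fun x b => ∫ t in a..b, G x t) := by
  refine contDiff_iff_forall_nat_le.2 fun m hm => ?_
  replace hG : ContDiff ℝ m ↿G := hG.of_le (by exact_mod_cast hm)
  clear hm
  induction m generalizing E with
  | zero =>
    exact contDiff_zero.2
      (intervalIntegral.continuous_parametric_primitive_of_continuous hG.continuous)
  | succ m ih =>
    obtain ⟨D, hD, hGD⟩ := contDiff_succ_iff_hasFDerivAt.1 hG
    let G' : H → ℝ → H →L[ℝ] E := fun x t => (D (x, t)).comp (inl ℝ H ℝ)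
    have hG' : ContDiff ℝ m ↿G' := hD.clm_comp contDiff_const
    have hGG' : ∀ x t, HasFDerivAt (G · t) (G' x t) x := fun x t =>
      (hGD (x, t)).comp (f := fun y => (y, t)) x (hasFDerivAt_prodMk_left x t)
    refine contDiff_succ_iff_hasFDerivAt.2 ⟨_, ?_, fun z =>
      (hasStrictFDerivAt_parametricPrimitive hG.continuous hG'.continuous hGG' a z).hasFDerivAt⟩
    have hcoprod : ContDiff ℝ m fun p : (H →L[ℝ] E) × (ℝ →L[ℝ] E) => p.1.coprod p.2 :=
      (coprodEquivL (S := ℝ) : ((H →L[ℝ] E) × (ℝ →L[ℝ] E)) ≃L[ℝ] (H × ℝ →L[ℝ] E)).contDiff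
    exact hcoprod.comp <|
      (ih hG').prodMk ((toSpanSingletonCLE (𝕜 := ℝ)).contDiff.comp hG.of_succ)

section CoordPrimitive

variable {n : ℕ} {f : (Fin n → ℝ) → ℝ}

def updateCLM (i : Fin n) : (Fin n → ℝ) × ℝ →L[ℝ] (Fin n → ℝ) where
  toFun z := update z.1 i z.2
  map_add' _ _ := update_add ..
  map_smul' _ _ := update_smul ..
  cont := continuous_fst.update i continuous_snd

def coordPrimitive (i : Fin n) (f : (Fin n → ℝ) → ℝ) (v : Fin n → ℝ) : ℝ :=
  ∫ t in (0 : ℝ)..v i, f (update v i t)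

@[fun_prop]
theorem contDiff_coordPrimitive {k : ℕ∞} (hf : ContDiff ℝ k f) (i : Fin n) :
    ContDiff ℝ k (coordPrimitive i f) :=
  (contDiff_parametricPrimitive (G := fun x t => f (update x i t))
    (hf.comp (updateCLM i).contDiff) 0).comp (contDiff_id.prodMk (contDiff_apply ℝ ℝ i))

theorem pd_coordPrimitive (hf : ContDiff ℝ 1 f) (i j : Fin n) (v : Fin n → ℝ) :
    pd j (coordPrimitive i f) v =
      (∫ t in (0 : ℝ)..v i, fderiv ℝ f (update v i t) (update (Pi.single j 1) i 0))
        + (Pi.single j 1 : Fin n → ℝ) i * f v := by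
  let K := (updateCLM i).comp (inl ℝ (Fin n → ℝ) ℝ)
  have hG : Continuous fun z : (Fin n → ℝ) × ℝ => f (update z.1 i z.2) :=
    hf.continuous.comp (updateCLM i).continuous
  have hG' : Continuous fun z : (Fin n → ℝ) × ℝ => (fderiv ℝ f (update z.1 i z.2)).comp K :=
    ((hf.continuous_fderiv one_ne_zero).comp (updateCLM i).continuous).clm_comp continuous_const
  have hGG' (x : Fin n → ℝ) (t : ℝ) :
      HasFDerivAt (fun x => f (update x i t)) ((fderiv ℝ f (update x i t)).comp K) x :=
    (hf.differentiable one_ne_zero _).hasFDerivAt.comp x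
      ((updateCLM i).hasFDerivAt.comp x (hasFDerivAt_prodMk_left x t))
  have hΦ := (hasStrictFDerivAt_parametricPrimitive (G := fun x t => f (update x i t))
    hG hG' hGG' 0 (v, v i)).hasFDerivAt
  have hP : HasFDerivAt (coordPrimitive i f) _ v :=
    (hΦ.comp v ((ContinuousLinearMap.id ℝ (Fin n → ℝ)).prod (proj i)).hasFDerivAt :)
  have hint : IntervalIntegrable (fun t => (fderiv ℝ f (update v i t)).comp K) volume 0 (v i) :=
    (hG'.comp (Continuous.prodMk_right v)).intervalIntegrable _ _
  rw [pd, hP.fderiv, ContinuousLinearMap.comp_apply, coprod_apply]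
  dsimp only
  rw [intervalIntegral_apply hint]
  simp [K, updateCLM, update_eq_self]

theorem pd_coordPrimitive_self (hf : ContDiff ℝ 1 f) (i : Fin n) :
    pd i (coordPrimitive i f) = f := by
  ext v
  simp [pd_coordPrimitive hf, Pi.single, update_idem]

theorem pd_coordPrimitive_of_ne (hf : ContDiff ℝ 1 f) {i j : Fin n} (hji : j ≠ i) :
    pd j (coordPrimitive i f) = coordPrimitive i (pd j f) := by
  ext v
  rw [pd_coordPrimitive hf, Pi.single_eq_of_ne hji.symm, zero_mul, add_zero,
    update_eq_self_iff.2 (Pi.single_eq_of_ne hji.symm _).symm]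
  rfl

theorem coordPrimitive_zero (i : Fin n) : coordPrimitive i (0 : (Fin n → ℝ) → ℝ) = 0 := by
  ext v
  simp [coordPrimitive]

end CoordPrimitive

section PartialDeriv

variable {n : ℕ} {f g : (Fin n → ℝ) → ℝ}

theorem contDiff_pd {k m : WithTop ℕ∞} (hf : ContDiff ℝ k f) (hmk : m + 1 ≤ k) (j : Fin n) :
    ContDiff ℝ m (pd j f) :=
  (hf.fderiv_right hmk).clm_apply contDiff_const

@[fun_prop]
theorem ContDiff.pd (hf : ContDiff ℝ ∞ f) (j : Fin n) : ContDiff ℝ ∞ (pd j f) :=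
  contDiff_pd hf (by simp) j

theorem pd_add_s10 (hf : Differentiable ℝ f) (hg : Differentiable ℝ g) (j : Fin n) :
    pd j (f + g) = pd j f + pd j g := by
  ext v
  simp [pd, fderiv_add (hf v) (hg v)]

theorem pd_sub (hf : Differentiable ℝ f) (hg : Differentiable ℝ g) (j : Fin n) :
    pd j (f - g) = pd j f - pd j g := by
  ext v
  simp [pd, fderiv_sub (hf v) (hg v)]

theorem pd_const_smul (c : ℝ) (hf : Differentiable ℝ f) (j : Fin n) :
    pd j (c • f) = c • pd j f := by
  ext v
  simp [pd, fderiv_const_smul (hf v)]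

theorem hasDerivAt_comp_update {v : Fin n → ℝ} {i : Fin n} {t : ℝ}
    (hg : DifferentiableAt ℝ g (update v i t)) :
    HasDerivAt (fun s => g (update v i s)) (pd i g (update v i t)) t :=
  hg.hasFDerivAt.comp_hasDerivAt t (hasDerivAt_update v i t)

theorem comp_update_eq_of_pd_eq_zero (hg : Differentiable ℝ g) {i : Fin n} (h : pd i g = 0)
    (v : Fin n → ℝ) (c : ℝ) : g (update v i c) = g v := by
  have hconst := is_const_of_deriv_eq_zero (f := fun s => g (update v i s))
    (fun s => (hasDerivAt_comp_update (hg _)).differentiableAt)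
    (fun s => by rw [(hasDerivAt_comp_update (hg _)).deriv, h, Pi.zero_apply])
  simpa using hconst c (v i)

theorem pd_comp_update (hg : Differentiable ℝ g) (i j : Fin n) (c : ℝ) (v : Fin n → ℝ) :
    pd j (fun w => g (update w i c)) v =
      fderiv ℝ g (update v i c) (update (Pi.single j 1) i 0) := by
  have h : HasFDerivAt (fun w => g (update w i c)) _ v :=
    ((hg _).hasFDerivAt.comp v
      ((updateCLM i).hasFDerivAt.comp v (hasFDerivAt_prodMk_left v c)) :)
  rw [pd, h.fderiv]
  rfl

theorem pd_comp_update_self (hg : Differentiable ℝ g) (i : Fin n) (c : ℝ) :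
    pd i (fun w => g (update w i c)) = 0 := by
  ext v
  simp [pd_comp_update hg, Pi.single, update_idem]

theorem pd_comp_update_of_ne (hg : Differentiable ℝ g) {i j : Fin n} (hji : j ≠ i) (c : ℝ) :
    pd j (fun w => g (update w i c)) = fun v => pd j g (update v i c) := by
  ext v
  rw [pd_comp_update hg, update_eq_self_iff.2 (Pi.single_eq_of_ne hji.symm _).symm]
  rfl

theorem exists_add_of_pd_pd_eq_zero {g : (Fin n → ℝ) → ℝ} {k : WithTop ℕ∞} (hg : ContDiff ℝ k g)
    (hk : 2 ≤ k) {i j : Fin n} (hij : i ≠ j) (h : pd i (pd j g) = 0) :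
    ∃ α β : (Fin n → ℝ) → ℝ, ContDiff ℝ k α ∧ ContDiff ℝ k β ∧
      pd j α = 0 ∧ pd i β = 0 ∧ g = α + β := by
  let β := fun v => g (update v i 0)
  have hβ : ContDiff ℝ k β :=
    hg.comp ((updateCLM i).contDiff.comp (contDiff_id.prodMk contDiff_const))
  have hk₀ : k ≠ 0 := (lt_of_lt_of_le two_pos hk).ne'
  have hg₁ : Differentiable ℝ g := hg.differentiable hk₀
  have hgj : ∀ v c, pd j g (update v i c) = pd j g v :=
    comp_update_eq_of_pd_eq_zero ((contDiff_pd hg (m := 1) hk j).differentiable one_ne_zero) h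
  refine ⟨g - β, β, hg.sub hβ, hβ, ?_, pd_comp_update_self hg₁ i 0, (sub_add_cancel g β).symm⟩
  rw [pd_sub hg₁ (hβ.differentiable hk₀), pd_comp_update_of_ne hg₁ hij.symm]
  ext v
  simp [hgj]

theorem pd_pd_defect {p q r : (Fin n → ℝ) → ℝ} (hp : ContDiff ℝ ∞ p) (hq : ContDiff ℝ ∞ q)
    (hr : ContDiff ℝ ∞ r) {i j : Fin n} (hij : i ≠ j) :
    pd i (pd j ((-2 : ℝ) • q - coordPrimitive j (pd i p) - coordPrimitive i (pd j r))) =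
      -(pd i (pd i p) + (2 : ℝ) • pd i (pd j q) + pd j (pd j r)) := by
  simp (disch := fun_prop (disch := simp)) only [pd_sub, pd_const_smul, pd_coordPrimitive_self,
    pd_coordPrimitive_of_ne _ hij.symm]
  module

end PartialDeriv

/-- Potentialization: if smooth `p, q, r` satisfy `p_{xx} + 2q_{xy} + r_{yy} = 0`
everywhere, then there exist smooth `F, G` such that `p = F_y`,
`q = −(F_x + G_y)/2` and `r = G_x`. -/
theorem SD1_potentialization
    (p q r : (Fin 4 → ℝ) → ℝ)
    (hp : ContDiff ℝ (⊤ : ℕ∞) p)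
    (hq : ContDiff ℝ (⊤ : ℕ∞) q)
    (hr : ContDiff ℝ (⊤ : ℕ∞) r)
    (h : ∀ x : Fin 4 → ℝ,
      pd 2 (pd 2 p) x + 2 * pd 2 (pd 3 q) x + pd 3 (pd 3 r) x = 0) :
    ∃ F G : (Fin 4 → ℝ) → ℝ,
      ContDiff ℝ (⊤ : ℕ∞) F ∧ ContDiff ℝ (⊤ : ℕ∞) G ∧
      ∀ x : Fin 4 → ℝ,
        p x = pd 3 F x ∧
        q x = -(pd 2 F x + pd 3 G x) / 2 ∧
        r x = pd 2 G x := by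
  have hxy : (2 : Fin 4) ≠ 3 := by decide
  set ψ := (-2 : ℝ) • q - coordPrimitive 3 (pd 2 p) - coordPrimitive 2 (pd 3 r) with hψ_def
  have hψ : ContDiff ℝ ∞ ψ :=
    ((contDiff_const.smul hq).sub (contDiff_coordPrimitive (hp.pd 2) 3)).sub
      (contDiff_coordPrimitive (hr.pd 3) 2)
  have hψ_xy : pd 2 (pd 3 ψ) = 0 := by
    rw [hψ_def, pd_pd_defect hp hq hr hxy]
    ext v
    simp [h v]
  obtain ⟨α, β, hα, hβ, hα_y, hβ_x, hψ_eq⟩ :=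
    exists_add_of_pd_pd_eq_zero hψ (by norm_cast) hxy hψ_xy
  refine ⟨coordPrimitive 3 p + coordPrimitive 2 α, coordPrimitive 2 r + coordPrimitive 3 β,
    (contDiff_coordPrimitive hp 3).add (contDiff_coordPrimitive hα 2),
    (contDiff_coordPrimitive hr 2).add (contDiff_coordPrimitive hβ 3), fun v => ?_⟩
  simp (disch := fun_prop (disch := simp)) only [pd_add_s10, pd_coordPrimitive_self,
    pd_coordPrimitive_of_ne _ hxy, pd_coordPrimitive_of_ne _ hxy.symm, hα_y, hβ_x,
    coordPrimitive_zero, Pi.add_apply]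
  have hψ_v := congrFun hψ_eq v
  simp only [hψ_def, Pi.sub_apply, Pi.smul_apply, Pi.add_apply, smul_eq_mul] at hψ_v
  exact ⟨by simp, by linarith, by simp⟩
end
end
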